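/- Let k ∈ ℕ with k ≥ 1 and 0 < ε < 1/k, and let f : 𝕊¹ → 𝕊¹ be the circle diffeomorphism induced by x ↦ x + π/k + ε sin²(kx). Then f has no nonconstant C¹ first integral, i.e. every C¹ function F : 𝕊¹ → ℝ with F ∘ f = F is constant. -/

import Mathlib

/-!
Write `f = g + π/k` with `g x = x + ε sin²(kx)`. Since `g` commutes with translation by `π/k`,
`f^[2k] = g^[2k] + 2π`, so a `2π`-periodic first integral `F` of `f` is also invariant under
`g^[2k]`. For `εk < 1` the map `g` is strictly increasing, fixes the points `mπ/k` and moves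
every other point up, so each `g`-orbit increases to the right end `mπ/k` of its interval.
By continuity `F x = F (mπ/k)`, and `f (mπ/k) = (m+1)π/k` shows that `F` is constant on these
points.
-/

open Real Set Filter Topology

theorem iterate_add_const_apply_of_map_add_const {M : Type*} [AddMonoid M] {g : M → M} {c : M}
    (hg : ∀ x, g (x + c) = g x + c) (n : ℕ) (x : M) :
    (fun y => g y + c)^[n] x = g^[n] x + n • c := by
  have hcomm : Function.Commute (· + c) g := fun x => (hg x).symm
  rw [show (fun y => g y + c) = (· + c) ∘ g from rfl, hcomm.comp_iterate, Function.comp_apply,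
    add_right_iterate_apply]

theorem apply_eq_of_tendsto_iterate {α β : Type*} [TopologicalSpace α] [TopologicalSpace β]
    [T2Space β] {F : α → β} {h : α → α} {x L : α} (hF : ContinuousAt F L)
    (hinv : ∀ y, F (h y) = F y) (hx : Tendsto (fun n => h^[n] x) atTop (𝓝 L)) : F x = F L := by
  have hconst : (fun n => F (h^[n] x)) = fun _ => F x :=
    funext fun n => congrFun (Function.iterate_invariant (funext hinv) n) x
  have hlim : Tendsto (fun n => F (h^[n] x)) atTop (𝓝 (F L)) := hF.tendsto.comp hx
  rw [hconst] at hlim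
  exact tendsto_nhds_unique tendsto_const_nhds hlim

theorem tendsto_iterate_of_lt_apply {α : Type*} [ConditionallyCompleteLinearOrder α]
    [TopologicalSpace α] [OrderTopology α] {g : α → α} (hg : Continuous g) {a b x : α}
    (hlt_apply : ∀ y ∈ Ioo a b, y < g y) (happly_lt : ∀ y ∈ Ioo a b, g y < b)
    (hx : x ∈ Ioo a b) : Tendsto (fun n => g^[n] x) atTop (𝓝 b) := by
  have hmem : ∀ n, g^[n] x ∈ Ioo a b := by
    intro n
    induction n with
    | zero => exact hx
    | succ n ih =>
      rw [Function.iterate_succ_apply']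
      exact ⟨ih.1.trans (hlt_apply _ ih), happly_lt _ ih⟩
  have hmono : Monotone fun n => g^[n] x := monotone_nat_of_le_succ fun n => by
    rw [Function.iterate_succ_apply']
    exact (hlt_apply _ (hmem n)).le
  have hbdd : BddAbove (range fun n => g^[n] x) :=
    ⟨b, forall_mem_range.2 fun n => (hmem n).2.le⟩
  have hlim := tendsto_atTop_ciSup hmono hbdd
  set L := ⨆ n, g^[n] x
  have hfix : g L = L := isFixedPt_of_tendsto_iterate hlim hg.continuousAt
  have haL : a < L := (hmem 0).1.trans_le (le_ciSup hbdd 0)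
  have hLb : L ≤ b := ciSup_le fun n => (hmem n).2.le
  obtain rfl | hLb := hLb.eq_or_lt
  · exact hlim
  · exact absurd hfix (hlt_apply L ⟨haL, hLb⟩).ne'

theorem Real.sin_ne_zero_of_mem_Ioo {x : ℝ} (j : ℤ) (hx : x ∈ Ioo (j * π) ((j + 1) * π)) :
    sin x ≠ 0 := by
  refine Real.sin_ne_zero_iff.2 fun n hn => ?_
  subst hn
  have h1 : (j : ℝ) < n := (mul_lt_mul_iff_of_pos_right pi_pos).1 hx.1
  have h2 : (n : ℝ) < j + 1 := (mul_lt_mul_iff_of_pos_right pi_pos).1 hx.2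
  norm_cast at h1 h2
  omega

noncomputable def sinSqPerturb (k : ℕ) (ε x : ℝ) : ℝ := x + ε * sin (k * x) ^ 2

namespace sinSqPerturb

variable {k : ℕ} {ε : ℝ}

theorem continuous : Continuous (sinSqPerturb k ε) := by
  unfold sinSqPerturb
  fun_prop

theorem map_add_pi_div (x : ℝ) :
    sinSqPerturb k ε (x + π / k) = sinSqPerturb k ε x + π / k := by
  rcases Nat.eq_zero_or_pos k with rfl | hk
  · simp [sinSqPerturb]
  have : (k : ℝ) * (x + π / k) = k * x + (1 : ℤ) * π := by
    field_simp
    push_cast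
    ring
  simp only [sinSqPerturb, this, sin_add_int_mul_pi]
  ring

theorem map_int_mul_pi_div (m : ℤ) : sinSqPerturb k ε (m * (π / k)) = m * (π / k) := by
  rcases Nat.eq_zero_or_pos k with rfl | hk
  · simp [sinSqPerturb]
  have : (k : ℝ) * (m * (π / k)) = m * π := by field_simp
  simp [sinSqPerturb, this, sin_int_mul_pi]

theorem hasDerivAt (x : ℝ) :
    HasDerivAt (sinSqPerturb k ε) (1 + ε * (k * sin (2 * (k * x)))) x := by
  have hsin : HasDerivAt (fun y => sin (k * y)) (cos (k * x) * k) x :=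
    ((hasDerivAt_id x).const_mul (k : ℝ)).sin.congr_deriv (by simp)
  refine ((hasDerivAt_id' x).add ((hsin.pow 2).const_mul ε)).congr_deriv ?_
  rw [sin_two_mul]
  ring

theorem strictMono (hεk : |ε| * k < 1) : StrictMono (sinSqPerturb k ε) := by
  refine strictMono_of_deriv_pos fun x => ?_
  rw [(hasDerivAt x).deriv]
  have hbound : |ε * (k * sin (2 * (k * x)))| ≤ |ε| * k := by
    rw [abs_mul, abs_mul, Nat.abs_cast]
    exact mul_le_mul_of_nonneg_left
      (mul_le_of_le_one_right k.cast_nonneg (abs_sin_le_one _)) (abs_nonneg ε)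
  linarith [neg_abs_le (ε * (k * sin (2 * (k * x))))]

theorem iterate_two_mul_add_pi_div (hk : k ≠ 0) (x : ℝ) :
    (fun y => sinSqPerturb k ε y + π / k)^[2 * k] x = (sinSqPerturb k ε)^[2 * k] x + 2 * π := by
  rw [iterate_add_const_apply_of_map_add_const map_add_pi_div, nsmul_eq_mul]
  push_cast
  field_simp

theorem lt_self (hε : 0 < ε) {x : ℝ} (hx : sin (k * x) ≠ 0) : x < sinSqPerturb k ε x := by
  unfold sinSqPerturb
  have : 0 < ε * sin (k * x) ^ 2 := by positivity
  linarith

theorem tendsto_iterate (hk : 0 < k) (hε : 0 < ε) (hεk : ε * k < 1) (x : ℝ) :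
    ∃ m : ℤ, Tendsto (fun n => (sinSqPerturb k ε)^[n] x) atTop (𝓝 (m * (π / k))) := by
  have hk' : (0 : ℝ) < k := Nat.cast_pos.2 hk
  have hp : 0 < π / k := by positivity
  set j := ⌊x / (π / k)⌋
  have hjx : j * (π / k) ≤ x := (le_div_iff₀ hp).1 (Int.floor_le _)
  have hxj : x < (j + 1) * (π / k) := (div_lt_iff₀ hp).1 (Int.lt_floor_add_one _)
  obtain hjx | hjx := hjx.eq_or_lt
  · refine ⟨j, ?_⟩
    simp only [← hjx, Function.iterate_fixed (map_int_mul_pi_div j), tendsto_const_nhds]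
  refine ⟨j + 1, ?_⟩
  have hmono := strictMono (k := k) (ε := ε) (by rwa [abs_of_pos hε])
  push_cast
  refine tendsto_iterate_of_lt_apply continuous (fun y hy => lt_self hε ?_) (fun y hy => ?_)
    ⟨hjx, hxj⟩
  · have hscale : ∀ t : ℝ, k * (t * (π / k)) = t * π := fun t => by field_simp
    refine Real.sin_ne_zero_of_mem_Ioo j ⟨?_, ?_⟩
    · simpa only [hscale] using mul_lt_mul_of_pos_left hy.1 hk'
    · simpa only [hscale] using mul_lt_mul_of_pos_left hy.2 hk'
  · have hfix := map_int_mul_pi_div (k := k) (ε := ε) (j + 1)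
    push_cast at hfix
    simpa only [hfix] using hmono hy.2

end sinSqPerturb

/-- the circle diffeomorphism induced by `x ↦ x + π/k + ε sin²(kx)`
(`k ≥ 1`, `0 < ε < 1/k`) has no nonconstant C¹ first integral: every C¹ function
`F : ℝ → ℝ` that is `2π`-periodic (i.e. a function on `𝕊¹ = ℝ/2πℤ`) and satisfies
`F ∘ f = F` is constant. -/
theorem no_nonconstant_first_integral (k : ℕ) (hk : 1 ≤ k) (ε : ℝ)
    (hε0 : 0 < ε) (hε : ε < 1 / k)
    (f : ℝ → ℝ) (hf : ∀ x, f x = x + Real.pi / k + ε * (Real.sin (k * x)) ^ 2)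
    (F : ℝ → ℝ) (hF : ContDiff ℝ 1 F)
    (hper : ∀ x, F (x + 2 * Real.pi) = F x)
    (hint : ∀ x, F (f x) = F x) :
    ∀ x y, F x = F y := by
  suffices key : ∀ x, F x = F 0 from fun x y => (key x).trans (key y).symm
  have hk' : (0 : ℝ) < k := Nat.cast_pos.2 hk
  have hfg : ∀ y, f y = sinSqPerturb k ε y + π / k := fun y => by
    rw [hf, sinSqPerturb]
    ring
  have hinv : ∀ y, F ((sinSqPerturb k ε)^[2 * k] y) = F y := fun y => calc
    F ((sinSqPerturb k ε)^[2 * k] y) = F ((sinSqPerturb k ε)^[2 * k] y + 2 * π) := (hper _).symm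
    _ = F (f^[2 * k] y) := by
      rw [funext hfg, sinSqPerturb.iterate_two_mul_add_pi_div (by omega)]
    _ = F y := congrFun (Function.iterate_invariant (funext hint) _) y
  have hgrid : Function.Periodic (fun m : ℤ => F (m * (π / k))) 1 := fun m => by
    have hstep : f (m * (π / k)) = ((m + 1 : ℤ) : ℝ) * (π / k) := by
      rw [hfg, sinSqPerturb.map_int_mul_pi_div]
      push_cast
      ring
    simp only [← hstep, hint]
  intro x
  obtain ⟨m, hm⟩ := sinSqPerturb.tendsto_iterate hk hε0 ((lt_div_iff₀ hk').1 hε) x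
  have hsub :
      Tendsto (fun n => ((sinSqPerturb k ε)^[2 * k])^[n] x) atTop (𝓝 (m * (π / k))) := by
    simp only [← Function.iterate_mul]
    exact hm.comp (strictMono_mul_left_of_pos (by omega)).tendsto_atTop
  rw [apply_eq_of_tendsto_iterate hF.continuous.continuousAt hinv hsub]
  simpa using hgrid.int_mul_eq m
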